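/- Any linear isometry Φ of Z⁷ (with orthonormal basis η₀,...,η₆) that preserves the subgroup P generated by η₀+η₃+η₄+η₅, η₁+η₃+η₄+η₆, η₂+η₃+η₅+η₆, and which fixes η₃, η₀, η₁, η₂ up to sign, must fix all of η₀,...,η₆ if Φ(η₀+η₁+η₂−η₃) = η₀+η₁+η₂−η₃. -/
import Mathlib


/-- The standard inner product on `ℤ⁷`. -/
def dot (x y : Fin 7 → ℤ) : ℤ := ∑ i, x i * y i

/-- The orthonormal basis `η₀, …, η₆` of `ℤ⁷`. -/
def eta (i : Fin 7) : Fin 7 → ℤ := Pi.single i 1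

/-- Characters of the three projective indecomposable modules. -/
def p0 : Fin 7 → ℤ := eta 0 + eta 3 + eta 4 + eta 5
def p1 : Fin 7 → ℤ := eta 1 + eta 3 + eta 4 + eta 6
def p2 : Fin 7 → ℤ := eta 2 + eta 3 + eta 5 + eta 6

/-- The subgroup `P` of `ℤ⁷` generated by `p₀, p₁, p₂`. -/
def P : Submodule ℤ (Fin 7 → ℤ) := Submodule.span ℤ {p0, p1, p2}

lemma dot_eta (x : Fin 7 → ℤ) (j : Fin 7) : dot x (eta j) = x j := by
  simp [dot, eta, Pi.single_apply, mul_ite]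

lemma mem_P (x : Fin 7 → ℤ) (hx : x ∈ P) :
    ∃ a b c : ℤ, x = a • p0 + b • p1 + c • p2 := by
  rw [P, Submodule.mem_span_insert] at hx
  obtain ⟨a, z, hz, rfl⟩ := hx
  rw [Submodule.mem_span_pair] at hz
  obtain ⟨b, c, rfl⟩ := hz
  exact ⟨a, b, c, by ring⟩


/-- A linear isometry of `ℤ⁷` preserving `P` which fixes `η₀, η₁, η₂, η₃` up to sign
and fixes `η₀+η₁+η₂−η₃` must fix all of `η₀, …, η₆`. -/
theorem stmt_7 (f : (Fin 7 → ℤ) ≃ₗ[ℤ] (Fin 7 → ℤ))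
    (hiso : ∀ x y, dot (f x) (f y) = dot x y)
    (hP : ∀ p ∈ P, f p ∈ P) (hP' : ∀ p ∈ P, f.symm p ∈ P)
    (hfix : ∀ i : Fin 7, i = 0 ∨ i = 1 ∨ i = 2 ∨ i = 3 →
      f (eta i) = eta i ∨ f (eta i) = -eta i)
    (hw : f (eta 0 + eta 1 + eta 2 - eta 3) = eta 0 + eta 1 + eta 2 - eta 3) :
    ∀ i : Fin 7, f (eta i) = eta i := by
  have h0 := hfix 0 (by tauto)
  have h1 := hfix 1 (by tauto)
  have h2 := hfix 2 (by tauto)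
  have h3 := hfix 3 (by tauto)
  have hw' : f (eta 0) + f (eta 1) + f (eta 2) - f (eta 3)
      = eta 0 + eta 1 + eta 2 - eta 3 := by
    rw [← map_add, ← map_add, ← map_sub]; exact hw
  -- fix signs
  have key : ∀ k : Fin 7, (f (eta 0)) k + (f (eta 1)) k + (f (eta 2)) k - (f (eta 3)) k
      = (eta 0) k + (eta 1) k + (eta 2) k - (eta 3) k := by
    intro k
    have := congrFun hw' k
    simpa using this
  have e0 : f (eta 0) = eta 0 := by
    rcases h0 with h|h
    · exact h
    · exfalso
      have := key 0
      rw [h] at this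
      rcases h1 with h'|h' <;> rcases h2 with h''|h'' <;> rcases h3 with h'''|h''' <;>
        rw [h', h'', h'''] at this <;> simp [eta, Pi.single] at this
  have e1 : f (eta 1) = eta 1 := by
    rcases h1 with h|h
    · exact h
    · exfalso
      have := key 1
      rw [h, e0] at this
      rcases h2 with h''|h'' <;> rcases h3 with h'''|h''' <;>
        rw [h'', h'''] at this <;> simp [eta, Pi.single] at this
  have e2 : f (eta 2) = eta 2 := by
    rcases h2 with h|h
    · exact h
    · exfalso
      have := key 2
      rw [h, e0, e1] at this
      rcases h3 with h'''|h''' <;>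
        rw [h'''] at this <;> simp [eta, Pi.single] at this
  have e3 : f (eta 3) = eta 3 := by
    rcases h3 with h|h
    · exact h
    · exfalso
      have := key 3
      rw [h, e0, e1, e2] at this
      simp [eta, Pi.single] at this
  -- coordinates of f (eta i), i = 4,5,6, at j = 0,1,2,3 vanish
  have zero_coord : ∀ (i : Fin 7), ∀ (j : Fin 7), f (eta j) = eta j → i ≠ j →
      (f (eta i)) j = 0 := by
    intro i j hj hij
    have := hiso (eta i) (eta j)
    rw [hj, dot_eta] at this
    rw [this, dot_eta, eta, Pi.single_apply, if_neg (Ne.symm hij)]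
  -- f p0 ∈ P etc
  have fp : ∀ (q : Fin 7 → ℤ) (i j : Fin 7), q = eta i + eta j →
      i ≠ 0 → i ≠ 1 → i ≠ 2 → i ≠ 3 → j ≠ 0 → j ≠ 1 → j ≠ 2 → j ≠ 3 → True := by
    intros; trivial
  have hp0 : f p0 ∈ P := hP p0 (Submodule.subset_span (by simp))
  have hp1 : f p1 ∈ P := hP p1 (Submodule.subset_span (by simp))
  have hp2 : f p2 ∈ P := hP p2 (Submodule.subset_span (by simp))
  obtain ⟨a0, b0, c0, hq0⟩ := mem_P _ hp0
  obtain ⟨a1, b1, c1, hq1⟩ := mem_P _ hp1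
  obtain ⟨a2, b2, c2, hq2⟩ := mem_P _ hp2
  have fp0 : f p0 = eta 0 + eta 3 + f (eta 4) + f (eta 5) := by
    rw [p0, map_add, map_add, map_add, e0, e3]
  have fp1 : f p1 = eta 1 + eta 3 + f (eta 4) + f (eta 6) := by
    rw [p1, map_add, map_add, map_add, e1, e3]
  have fp2 : f p2 = eta 2 + eta 3 + f (eta 5) + f (eta 6) := by
    rw [p2, map_add, map_add, map_add, e2, e3]
  -- zero coordinates
  have z40 := zero_coord 4 0 e0 (by decide)
  have z41 := zero_coord 4 1 e1 (by decide)
  have z42 := zero_coord 4 2 e2 (by decide)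
  have z43 := zero_coord 4 3 e3 (by decide)
  have z50 := zero_coord 5 0 e0 (by decide)
  have z51 := zero_coord 5 1 e1 (by decide)
  have z52 := zero_coord 5 2 e2 (by decide)
  have z53 := zero_coord 5 3 e3 (by decide)
  have z60 := zero_coord 6 0 e0 (by decide)
  have z61 := zero_coord 6 1 e1 (by decide)
  have z62 := zero_coord 6 2 e2 (by decide)
  have z63 := zero_coord 6 3 e3 (by decide)
  -- extract coefficients: evaluate hq at 0,1,2
  have coeff : ∀ (q : Fin 7 → ℤ) (a b c : ℤ), q = a • p0 + b • p1 + c • p2 →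
      (q 0 = a ∧ q 1 = b ∧ q 2 = c) := by
    intro q a b c h
    refine ⟨?_, ?_, ?_⟩ <;>
    · have := congrFun h
      first
        | (have h0' := this 0; simp [p0, p1, p2, eta, Pi.single] at h0'; omega)
        | (have h1' := this 1; simp [p0, p1, p2, eta, Pi.single] at h1'; omega)
        | (have h2' := this 2; simp [p0, p1, p2, eta, Pi.single] at h2'; omega)
  have ha0 := (coeff _ _ _ _ hq0).1
  have hb0 := (coeff _ _ _ _ hq0).2.1
  have hc0 := (coeff _ _ _ _ hq0).2.2
  have ha1 := (coeff _ _ _ _ hq1).1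
  have hb1 := (coeff _ _ _ _ hq1).2.1
  have hc1 := (coeff _ _ _ _ hq1).2.2
  have ha2 := (coeff _ _ _ _ hq2).1
  have hb2 := (coeff _ _ _ _ hq2).2.1
  have hc2 := (coeff _ _ _ _ hq2).2.2
  have etav : ∀ i j : Fin 7, eta i j = if j = i then 1 else 0 := by
    intro i j; simp [eta, Pi.single_apply]
  rw [fp0] at ha0 hb0 hc0
  rw [fp1] at ha1 hb1 hc1
  rw [fp2] at ha2 hb2 hc2
  simp only [Pi.add_apply, etav, z40, z41, z42, z50, z51, z52, z60, z61, z62] at ha0 hb0 hc0 ha1 hb1 hc1 ha2 hb2 hc2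
  norm_num at ha0 hb0 hc0 ha1 hb1 hc1 ha2 hb2 hc2
  have q0 : f p0 = p0 := by
    rw [hq0, show a0 = 1 by omega, show b0 = 0 by omega, show c0 = 0 by omega]
    simp
  have q1 : f p1 = p1 := by
    rw [hq1, show a1 = 0 by omega, show b1 = 1 by omega, show c1 = 0 by omega]
    simp
  have q2 : f p2 = p2 := by
    rw [hq2, show a2 = 0 by omega, show b2 = 0 by omega, show c2 = 1 by omega]
    simp
  rw [fp0, p0] at q0
  rw [fp1, p1] at q1
  rw [fp2, p2] at q2
  have e4 : f (eta 4) = eta 4 := by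
    funext k
    have t0 := congrFun q0 k
    have t1 := congrFun q1 k
    have t2 := congrFun q2 k
    simp only [Pi.add_apply] at t0 t1 t2
    omega
  have e5 : f (eta 5) = eta 5 := by
    funext k
    have t0 := congrFun q0 k
    have t1 := congrFun q1 k
    have t2 := congrFun q2 k
    simp only [Pi.add_apply] at t0 t1 t2
    omega
  have e6 : f (eta 6) = eta 6 := by
    funext k
    have t0 := congrFun q0 k
    have t1 := congrFun q1 k
    have t2 := congrFun q2 k
    simp only [Pi.add_apply] at t0 t1 t2
    omega
  intro i
  fin_cases i
  · exact e0
  · exact e1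
  · exact e2
  · exact e3
  · exact e4
  · exact e5
  · exact e6
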